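/- Let Q₄ₖ be the regular 4k-gon with unit side length, positioned with one side's midpoint at the origin, that side on the x-axis, and the polygon in the upper half-plane. Let S be the unit square con{(1/2,0),(1/2,1),(−1/2,1),(−1/2,0)}. Define the mangled (4k−4)-gon M_k as the convex hull of the points A_m (m ∈ {1,…,4k−1} \ {k,2k,3k}) where A_m = (Σ_{j=1}^m cos(jπ/(2k)) − Σ_{ℓ=1}^{⌊m/k⌋} cos(ℓπ/2), Σ_{j=1}^m sin(jπ/(2k)) − Σ_{ℓ=1}^{⌊m/k⌋} sin(ℓπ/2)). Then M_k + S = Q₄ₖ (Minkowski sum), for every integer k ≥ 2. -/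

import Mathlib

/-!
Write `θ = π / (2k)`. The vertices of `Q₄ₖ` lie on a circle:
`C_m = (sin ψ, cos (θ/2) - cos ψ) / (2 sin (θ/2))` with `ψ = (m + 1/2) θ`.
The sums subtracted in `A_m` are the vertices `T_r` of `Q₄ = S`, so `A_m = C_m - T_⌊m/k⌋`.
Hence every `C_m` lies in `M_k + S`, and the excluded indices only repeat vertices
(`A_{rk} = A_{rk-1}`, `A_0 = A_{4k-1}`).

Conversely, `A_m + S` is the unit square with corner `C_m` on the side of the centre of the
circle. The mirror images of `C_m` in the two symmetry axes of `Q₄ₖ` are vertices again, so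
`Q₄ₖ` contains the axis-parallel rectangle they span with `C_m`, of width `|sin ψ| / sin (θ/2)`
and height `|cos ψ| / sin (θ/2)`. Both are at least `1`, since `ψ` is a multiple of `π/2` plus
an angle in `[θ/2, π/2 - θ/2]`; so the square fits.
-/

open Finset Pointwise

/-- The vertex `A_m` of the mangled `(4k-4)`-gon `M_k`. -/
noncomputable def mangledVertex (k m : ℕ) : ℝ × ℝ :=
  (∑ j ∈ Finset.Icc 1 m, Real.cos (j * (Real.pi / (2 * k))) -
      ∑ l ∈ Finset.Icc 1 (m / k), Real.cos (l * (Real.pi / 2)),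
   ∑ j ∈ Finset.Icc 1 m, Real.sin (j * (Real.pi / (2 * k))) -
      ∑ l ∈ Finset.Icc 1 (m / k), Real.sin (l * (Real.pi / 2)))

/-- The vertex `C_m` of the regular `4k`-gon `Q₄ₖ` with unit side length, positioned with
the midpoint of one side at the origin, that side on the x-axis, and the polygon in the
upper half-plane. -/
noncomputable def regularVertex (k m : ℕ) : ℝ × ℝ :=
  (1 / 2 + ∑ j ∈ Finset.Icc 1 m, Real.cos (j * (Real.pi / (2 * k))),
   ∑ j ∈ Finset.Icc 1 m, Real.sin (j * (Real.pi / (2 * k))))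

open Real
open scoped Interval

theorem two_mul_sin_half_mul_half_add_sum_cos (θ : ℝ) (m : ℕ) :
    2 * sin (θ / 2) * (1 / 2 + ∑ j ∈ Icc 1 m, cos (j * θ)) = sin ((m + 1 / 2) * θ) := by
  induction m with
  | zero => rw [Icc_eq_empty_of_lt zero_lt_one, sum_empty]; push_cast; ring_nf
  | succ n ih =>
    have step : sin ((n + 1 + 1 / 2) * θ) - sin ((n + 1 / 2) * θ) =
        2 * sin (θ / 2) * cos ((n + 1) * θ) := by
      rw [sin_sub_sin]; ring_nf
    rw [sum_Icc_succ_top (by omega), ← add_assoc, mul_add, ih]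
    push_cast
    linarith

theorem two_mul_sin_half_mul_sum_sin (θ : ℝ) (m : ℕ) :
    2 * sin (θ / 2) * ∑ j ∈ Icc 1 m, sin (j * θ) = cos (θ / 2) - cos ((m + 1 / 2) * θ) := by
  induction m with
  | zero => rw [Icc_eq_empty_of_lt zero_lt_one, sum_empty]; push_cast; ring_nf
  | succ n ih =>
    have step : cos ((n + 1 / 2) * θ) - cos ((n + 1 + 1 / 2) * θ) =
        2 * sin (θ / 2) * sin ((n + 1) * θ) := by
      rw [cos_sub_cos, show (n + 1 / 2) * θ - (n + 1 + 1 / 2) * θ = -θ by ring, neg_div,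
        sin_neg]
      ring_nf
    rw [sum_Icc_succ_top (by omega), mul_add, ih]
    push_cast
    linarith

theorem Real.sin_le_sin_of_le_of_le_pi_sub {a x : ℝ} (ha : 0 ≤ a) (hx : a ≤ x)
    (hx' : x ≤ π - a) : sin a ≤ sin x := by
  rcases le_total x (π / 2) with h | h
  · exact sin_le_sin_of_le_of_le_pi_div_two (by linarith [pi_pos]) h hx
  · rw [← sin_pi_sub x]
    exact sin_le_sin_of_le_of_le_pi_div_two (by linarith [pi_pos]) (by linarith) (by linarith)

theorem convexHull_pair_prod_pair (a a' b b' : ℝ) :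
    convexHull ℝ (({a, a'} : Set ℝ) ×ˢ ({b, b'} : Set ℝ)) = [[a, a']] ×ˢ [[b, b']] := by
  rw [convexHull_prod, convexHull_pair, convexHull_pair, segment_eq_uIcc, segment_eq_uIcc]

theorem Convex.uIcc_prod_uIcc_subset {s : Set (ℝ × ℝ)} (hs : Convex ℝ s) {a a' b b' : ℝ}
    (h₁ : (a, b) ∈ s) (h₂ : (a', b) ∈ s) (h₃ : (a, b') ∈ s) (h₄ : (a', b') ∈ s) :
    [[a, a']] ×ˢ [[b, b']] ⊆ s := by
  rw [← convexHull_pair_prod_pair]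
  refine convexHull_min ?_ hs
  rintro ⟨x, y⟩ ⟨hx, hy⟩
  rcases hx with rfl | rfl <;> rcases hy with rfl | rfl <;> assumption

theorem convexHull_unitSquare :
    convexHull ℝ {((1:ℝ)/2, (0:ℝ)), ((1:ℝ)/2, (1:ℝ)), (-(1:ℝ)/2, (1:ℝ)), (-(1:ℝ)/2, (0:ℝ))} =
      [[(1:ℝ)/2, -(1:ℝ)/2]] ×ˢ [[(0:ℝ), 1]] := by
  rw [← convexHull_pair_prod_pair]
  congr 1
  ext ⟨x, y⟩
  simp only [Set.mem_insert_iff, Set.mem_singleton_iff, Set.mem_prod, Prod.mk.injEq]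
  tauto

theorem sub_add_mem_uIcc_neg {s z c u : ℝ} (hs : 0 < s)
    (h : c = 1 / 2 ∧ s ≤ z ∨ c = -1 / 2 ∧ s ≤ -z) (hu : u ∈ [[(1 : ℝ) / 2, -1 / 2]]) :
    z / (2 * s) - c + u ∈ [[z / (2 * s), -(z / (2 * s))]] := by
  have hz : z / (2 * s) = (z / s) / 2 := by ring
  rw [Set.mem_uIcc] at hu ⊢
  rcases h with ⟨rfl, h⟩ | ⟨rfl, h⟩
  · have : 1 ≤ z / s := (one_le_div hs).2 h
    right; constructor <;> cases hu <;> linarith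
  · have : 1 ≤ -z / s := (one_le_div hs).2 h
    left; constructor <;> cases hu <;> linarith [neg_div s z]

theorem sub_add_mem_uIcc_add {s w y d v : ℝ} (hs : 0 < s)
    (h : d = 0 ∧ s ≤ w ∨ d = 1 ∧ s ≤ -w) (hv : v ∈ [[(0 : ℝ), 1]]) :
    y - d + v ∈ [[y, y + w / s]] := by
  rw [Set.uIcc_of_le zero_le_one] at hv
  rw [Set.mem_uIcc]
  rcases h with ⟨rfl, h⟩ | ⟨rfl, h⟩
  · have : 1 ≤ w / s := (one_le_div hs).2 h
    left; constructor <;> linarith [hv.1, hv.2]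
  · have : 1 ≤ -w / s := (one_le_div hs).2 h
    right; constructor <;> linarith [hv.1, hv.2, neg_div s w]

noncomputable def extAngle (k : ℕ) : ℝ := π / (2 * k)

/-- The point at angle `ψ`, measured from the downward vertical, on the circle with centre
`(0, cot (θ / 2) / 2)` and radius `1 / (2 sin (θ / 2))`: for `θ = π / (2k)` the circumcircle
of `Q₄ₖ`. -/
noncomputable def circumPoint (θ ψ : ℝ) : ℝ × ℝ :=
  (sin ψ / (2 * sin (θ / 2)), (cos (θ / 2) - cos ψ) / (2 * sin (θ / 2)))

noncomputable def regularPolygon (k : ℕ) : Set (ℝ × ℝ) :=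
  convexHull ℝ (regularVertex k '' {m | m ≤ 4 * k - 1})

theorem mangledVertex_eq_sub (k m : ℕ) :
    mangledVertex k m = regularVertex k m - regularVertex 1 (m / k) := by
  ext
  · simp only [mangledVertex, regularVertex, Prod.fst_sub, Nat.cast_one, mul_one]; ring
  · simp only [mangledVertex, regularVertex, Prod.snd_sub, Nat.cast_one, mul_one]

theorem regularVertex_succ (k m : ℕ) :
    regularVertex k (m + 1) =
      regularVertex k m + (cos ((m + 1) * extAngle k), sin ((m + 1) * extAngle k)) := by
  simp only [regularVertex, sum_Icc_succ_top (Nat.le_add_left 1 m), Prod.ext_iff,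
    Prod.fst_add, Prod.snd_add, extAngle]
  push_cast
  constructor <;> ring

theorem regularVertex_one_eq :
    regularVertex 1 0 = (1 / 2, 0) ∧ regularVertex 1 1 = (1 / 2, 1) ∧
      regularVertex 1 2 = (-1 / 2, 1) ∧ regularVertex 1 3 = (-1 / 2, 0) := by
  have h₀ : regularVertex 1 0 = (1 / 2, 0) := by simp [regularVertex]
  have h₁ := regularVertex_succ 1 0
  have h₂ := regularVertex_succ 1 1
  have h₃ := regularVertex_succ 1 2
  simp only [extAngle] at h₁ h₂ h₃
  norm_num [show 2 * (π / 2) = π by ring, show 3 * (π / 2) = π + π / 2 by ring,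
    sin_add, cos_add] at h₁ h₂ h₃
  simp only [h₃, h₂, h₁, h₀, Prod.mk_add_mk, Prod.mk.injEq]
  norm_num

theorem regularVertex_one_quadrant {s φ : ℝ} (hsin : s ≤ sin φ) (hcos : s ≤ cos φ) {r : ℕ}
    (hr : r < 4) :
    ((regularVertex 1 r).1 = 1 / 2 ∧ s ≤ sin (φ + r * (π / 2)) ∨
        (regularVertex 1 r).1 = -1 / 2 ∧ s ≤ -sin (φ + r * (π / 2))) ∧
      ((regularVertex 1 r).2 = 0 ∧ s ≤ cos (φ + r * (π / 2)) ∨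
        (regularVertex 1 r).2 = 1 ∧ s ≤ -cos (φ + r * (π / 2))) := by
  obtain ⟨h₀, h₁, h₂, h₃⟩ := regularVertex_one_eq
  interval_cases r
  · simp [h₀, hsin, hcos]
  · simp [h₁, hsin, hcos, sin_add_pi_div_two, cos_add_pi_div_two]
  · simp [h₂, hsin, hcos, show 2 * (π / 2) = π by ring, sin_add_pi, cos_add_pi]
  · simp [h₃, hsin, hcos, show φ + 3 * (π / 2) = φ + π / 2 + π by ring, sin_add_pi,
      cos_add_pi, sin_add_pi_div_two, cos_add_pi_div_two]

theorem regularVertex_one_mem_square {r : ℕ} (hr : r < 4) :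
    regularVertex 1 r ∈
      ({((1:ℝ)/2, (0:ℝ)), ((1:ℝ)/2, (1:ℝ)), (-(1:ℝ)/2, (1:ℝ)), (-(1:ℝ)/2, (0:ℝ))} :
        Set (ℝ × ℝ)) := by
  obtain ⟨h₀, h₁, h₂, h₃⟩ := regularVertex_one_eq
  interval_cases r <;> simp [h₀, h₁, h₂, h₃]

theorem circumPoint_add_int_mul_two_pi (θ ψ : ℝ) (n : ℤ) :
    circumPoint θ (ψ + n * (2 * π)) = circumPoint θ ψ := by
  simp only [circumPoint, sin_add_int_mul_two_pi, cos_add_int_mul_two_pi]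

theorem circumPoint_neg (θ ψ : ℝ) :
    circumPoint θ (-ψ) = (-(circumPoint θ ψ).1, (circumPoint θ ψ).2) := by
  simp only [circumPoint, sin_neg, cos_neg, neg_div]

theorem circumPoint_pi_sub (θ ψ : ℝ) :
    circumPoint θ (π - ψ) =
      ((circumPoint θ ψ).1, (circumPoint θ ψ).2 + cos ψ / sin (θ / 2)) := by
  simp only [circumPoint, sin_pi_sub, cos_pi_sub, Prod.mk.injEq, true_and]
  ring

theorem circumPoint_pi_add (θ ψ : ℝ) :
    circumPoint θ (π + ψ) =
      (-(circumPoint θ ψ).1, (circumPoint θ ψ).2 + cos ψ / sin (θ / 2)) := by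
  rw [add_comm]
  simp only [circumPoint, sin_add_pi, cos_add_pi, Prod.mk.injEq, neg_div, true_and]
  ring

section

variable {k : ℕ}

theorem two_mul_mul_extAngle (hk : k ≠ 0) : 2 * k * extAngle k = π := by
  have : (k : ℝ) ≠ 0 := Nat.cast_ne_zero.2 hk
  rw [extAngle]; field_simp

theorem extAngle_pos (hk : k ≠ 0) : 0 < extAngle k := by
  have : (0 : ℝ) < k := Nat.cast_pos.2 (Nat.pos_of_ne_zero hk)
  rw [extAngle]; positivity

theorem sin_half_extAngle_pos (hk : k ≠ 0) : 0 < sin (extAngle k / 2) := by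
  have h := two_mul_mul_extAngle hk
  have : (1 : ℝ) ≤ k := Nat.one_le_cast.2 (Nat.one_le_iff_ne_zero.2 hk)
  apply sin_pos_of_pos_of_lt_pi (by linarith [extAngle_pos hk])
  nlinarith [extAngle_pos hk, pi_pos]

theorem regularVertex_eq_circumPoint (hk : k ≠ 0) (m : ℕ) :
    regularVertex k m = circumPoint (extAngle k) ((m + 1 / 2) * extAngle k) := by
  have hs := (sin_half_extAngle_pos hk).ne'
  rw [regularVertex, circumPoint, Prod.ext_iff]
  constructor
  · rw [eq_div_iff (by positivity), ← two_mul_sin_half_mul_half_add_sum_cos]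
    rw [extAngle]; ring
  · rw [eq_div_iff (by positivity), ← two_mul_sin_half_mul_sum_sin]
    rw [extAngle]; ring

theorem regularVertex_add_four_mul (hk : k ≠ 0) (m : ℕ) :
    regularVertex k (m + 4 * k) = regularVertex k m := by
  rw [regularVertex_eq_circumPoint hk, regularVertex_eq_circumPoint hk,
    ← circumPoint_add_int_mul_two_pi _ ((m + 1 / 2) * extAngle k) 1]
  congr 1
  push_cast
  linear_combination 2 * two_mul_mul_extAngle hk

theorem circumPoint_mem_regularPolygon (hk : k ≠ 0) (n : ℤ) :
    circumPoint (extAngle k) ((n + 1 / 2) * extAngle k) ∈ regularPolygon k := by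
  have hN : (0 : ℤ) < 4 * k := by omega
  have h4k : (4 * k : ℤ) * extAngle k = 2 * π := by
    push_cast; linear_combination 2 * two_mul_mul_extAngle hk
  set m := (n % (4 * k)).toNat with hm
  have hmn : (m : ℤ) = n % (4 * k) := Int.toNat_of_nonneg (Int.emod_nonneg _ hN.ne')
  have hψ : ((n : ℝ) + 1 / 2) * extAngle k =
      (m + 1 / 2) * extAngle k + ((n / (4 * k) : ℤ) : ℝ) * (2 * π) := by
    rw [← h4k, show (m : ℝ) = ((m : ℤ) : ℝ) by norm_cast, hmn]
    nth_rw 1 [← Int.emod_add_mul_ediv n (4 * k)]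
    push_cast; ring
  rw [hψ, circumPoint_add_int_mul_two_pi, ← regularVertex_eq_circumPoint hk]
  refine subset_convexHull ℝ _ ⟨m, ?_, rfl⟩
  have := Int.emod_lt_of_pos n hN
  show m ≤ 4 * k - 1
  omega

theorem uIcc_prod_uIcc_subset_regularPolygon (hk : k ≠ 0) (n : ℤ) :
    let p := circumPoint (extAngle k) ((n + 1 / 2) * extAngle k)
    [[p.1, -p.1]] ×ˢ [[p.2, p.2 + cos ((n + 1 / 2) * extAngle k) / sin (extAngle k / 2)]] ⊆
      regularPolygon k := by
  intro p
  have hπ := two_mul_mul_extAngle hk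
  have mem (n' : ℤ) {ψ : ℝ} (h : ψ = (n' + 1 / 2) * extAngle k) :
      circumPoint (extAngle k) ψ ∈ regularPolygon k :=
    h ▸ circumPoint_mem_regularPolygon hk n'
  refine (convex_convexHull ℝ _).uIcc_prod_uIcc_subset (mem n rfl) ?_ ?_ ?_
  · rw [← circumPoint_neg]; exact mem (-1 - n) (by push_cast; ring)
  · rw [← circumPoint_pi_sub]; exact mem (2 * k - 1 - n) (by push_cast; linear_combination -hπ)
  · rw [← circumPoint_pi_add]; exact mem (n + 2 * k) (by push_cast; linear_combination -hπ)

theorem sin_half_extAngle_le_sin_and_cos (hk : k ≠ 0) {n : ℕ} (hn : n < k) :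
    sin (extAngle k / 2) ≤ sin ((n + 1 / 2) * extAngle k) ∧
      sin (extAngle k / 2) ≤ cos ((n + 1 / 2) * extAngle k) := by
  have hθ := extAngle_pos hk
  have hπ := two_mul_mul_extAngle hk
  have hn' : (n : ℝ) + 1 ≤ k := by exact_mod_cast hn
  have h₁ : extAngle k / 2 ≤ (n + 1 / 2) * extAngle k := by
    nlinarith [(Nat.cast_nonneg n : (0 : ℝ) ≤ n)]
  have h₂ : (n + 1 / 2) * extAngle k ≤ π / 2 - extAngle k / 2 := by nlinarith
  refine ⟨sin_le_sin_of_le_of_le_pi_sub (by positivity) h₁ (by linarith), ?_⟩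
  rw [← sin_pi_div_two_sub]
  exact sin_le_sin_of_le_of_le_pi_sub (by positivity) (by linarith) (by linarith)

theorem mangledVertex_add_mem_regularPolygon {m : ℕ} (hk : k ≠ 0) (hm : m < 4 * k)
    {q : ℝ × ℝ} (hq : q ∈ [[(1 : ℝ) / 2, -1 / 2]] ×ˢ [[(0 : ℝ), 1]]) :
    mangledVertex k m + q ∈ regularPolygon k := by
  have hr : m / k < 4 := Nat.div_lt_of_lt_mul (by rwa [mul_comm])
  have hn : m % k < k := Nat.mod_lt _ (Nat.pos_of_ne_zero hk)
  have hψ : ((m : ℤ) + 1 / 2 : ℝ) * extAngle k =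
      (↑(m % k) + 1 / 2) * extAngle k + ↑(m / k) * (π / 2) := by
    have hmk : (m : ℝ) = ↑(m % k) + k * ↑(m / k) := by exact_mod_cast (Nat.mod_add_div m k).symm
    push_cast
    rw [hmk]
    linear_combination (↑(m / k) / 2 : ℝ) * two_mul_mul_extAngle hk
  obtain ⟨hsin, hcos⟩ := sin_half_extAngle_le_sin_and_cos hk hn
  obtain ⟨hx, hy⟩ := regularVertex_one_quadrant hsin hcos hr
  have hbox := uIcc_prod_uIcc_subset_regularPolygon hk m
  rw [hψ] at hbox
  rw [mangledVertex_eq_sub, regularVertex_eq_circumPoint hk, ← Int.cast_natCast, hψ]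
  exact hbox ⟨sub_add_mem_uIcc_neg (sin_half_extAngle_pos hk) hx hq.1,
    sub_add_mem_uIcc_add (sin_half_extAngle_pos hk) hy hq.2⟩

theorem mangledVertex_mul_sub_one (hk : k ≠ 0) {r : ℕ} (hr : r ≠ 0) :
    mangledVertex k (r * k - 1) = mangledVertex k (r * k) := by
  obtain ⟨r, rfl⟩ := Nat.exists_eq_add_one_of_ne_zero hr
  obtain ⟨N, hN⟩ := Nat.exists_eq_add_one_of_ne_zero (Nat.mul_ne_zero hr hk)
  have hdiv : N / k = r := Nat.div_eq_of_lt_le (by rw [add_one_mul] at hN; omega) (by omega)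
  have hdiv' : (N + 1) / k = r + 1 := by rw [← hN, Nat.mul_div_cancel _ (Nat.pos_of_ne_zero hk)]
  have hangle : ((N : ℝ) + 1) * extAngle k = (r + 1) * extAngle 1 := by
    have hN' : (N : ℝ) + 1 = (r + 1) * k := by exact_mod_cast hN.symm
    have h1 : extAngle 1 = π / 2 := by simp [extAngle]
    rw [hN', h1]
    linear_combination (↑r + 1 : ℝ) / 2 * two_mul_mul_extAngle hk
  rw [hN, Nat.add_sub_cancel, mangledVertex_eq_sub, mangledVertex_eq_sub, hdiv, hdiv',
    regularVertex_succ, regularVertex_succ 1 r, hangle]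
  abel

theorem mangledVertex_four_mul (hk : k ≠ 0) : mangledVertex k (4 * k) = mangledVertex k 0 := by
  have hk4 : regularVertex k (4 * k) = regularVertex k 0 := by
    simpa using regularVertex_add_four_mul hk 0
  have h14 : regularVertex 1 4 = regularVertex 1 0 := regularVertex_add_four_mul one_ne_zero 0
  rw [mangledVertex_eq_sub, mangledVertex_eq_sub, Nat.mul_div_cancel _ (Nat.pos_of_ne_zero hk),
    Nat.zero_div, hk4, h14]

theorem image_mangledVertex_eq (hk : 2 ≤ k) :
    mangledVertex k '' {m : ℕ | 1 ≤ m ∧ m ≤ 4 * k - 1 ∧ m ≠ k ∧ m ≠ 2 * k ∧ m ≠ 3 * k} =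
      mangledVertex k '' {m : ℕ | m ≤ 4 * k - 1} := by
  have hk0 : k ≠ 0 := by omega
  refine (Set.image_mono fun m hm => hm.2.1).antisymm ?_
  rintro _ ⟨m, hm : m ≤ 4 * k - 1, rfl⟩
  by_cases hm' : 1 ≤ m ∧ m ≤ 4 * k - 1 ∧ m ≠ k ∧ m ≠ 2 * k ∧ m ≠ 3 * k
  · exact ⟨m, hm', rfl⟩
  have hmem (r : ℕ) (hr : r ≠ 0) (hr4 : r ≤ 4) :
      mangledVertex k (r * k) ∈ mangledVertex k ''
        {m : ℕ | 1 ≤ m ∧ m ≤ 4 * k - 1 ∧ m ≠ k ∧ m ≠ 2 * k ∧ m ≠ 3 * k} := by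
    refine ⟨r * k - 1, ?_, mangledVertex_mul_sub_one hk0 hr⟩
    interval_cases r <;> simp only [Set.mem_ofPred_eq] <;> omega
  rcases (by omega :
      m = 0 ∨ m = 1 * k ∨ m = 2 * k ∨ m = 3 * k) with rfl | rfl | rfl | rfl
  · rw [← mangledVertex_four_mul hk0]; exact hmem 4 (by norm_num) le_rfl
  all_goals exact hmem _ (by norm_num) (by norm_num)

end

/-- The Minkowski sum of the mangled `(4k-4)`-gon `M_k` and the unit square `S` is the
regular `4k`-gon `Q₄ₖ` with unit sides, for every integer `k ≥ 2`. -/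
theorem mangled_plus_square_eq_regular (k : ℕ) (hk : 2 ≤ k) :
    (convexHull ℝ (mangledVertex k ''
        {m : ℕ | 1 ≤ m ∧ m ≤ 4 * k - 1 ∧ m ≠ k ∧ m ≠ 2 * k ∧ m ≠ 3 * k})) +
      (convexHull ℝ {((1:ℝ)/2, (0:ℝ)), ((1:ℝ)/2, (1:ℝ)),
        (-(1:ℝ)/2, (1:ℝ)), (-(1:ℝ)/2, (0:ℝ))}) =
    convexHull ℝ (regularVertex k '' {m : ℕ | m ≤ 4 * k - 1}) := by
  have hk0 : k ≠ 0 := by omega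
  rw [image_mangledVertex_eq hk]
  apply Set.Subset.antisymm
  · rw [← convexHull_add]
    refine convexHull_min ?_ (convex_convexHull ℝ _)
    rintro _ ⟨_, ⟨m, hm : m ≤ 4 * k - 1, rfl⟩, q, hq, rfl⟩
    exact mangledVertex_add_mem_regularPolygon hk0 (by omega)
      (convexHull_unitSquare ▸ subset_convexHull ℝ _ hq)
  · refine convexHull_min ?_ ((convex_convexHull ℝ _).add (convex_convexHull ℝ _))
    rintro _ ⟨m, hm : m ≤ 4 * k - 1, rfl⟩
    rw [← sub_add_cancel (regularVertex k m) (regularVertex 1 (m / k)), ← mangledVertex_eq_sub]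
    have hr : m / k < 4 := Nat.div_lt_of_lt_mul (by omega)
    exact Set.add_mem_add (subset_convexHull ℝ _ ⟨m, hm, rfl⟩)
      (subset_convexHull ℝ _ (regularVertex_one_mem_square hr))
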